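/- arXiv:2308.05446 — 2 statements merged into one kernel-verified Lean document; each statement's English description precedes it below -/
import Mathlib

section
/- For t > −1, s ∈ [0,1], and z₁, z₂ ∈ ℝ^{N×n} with s + |z₁| + |z₂| > 0, one has ∫₀¹ [s² + |z₁ + y(z₂ − z₁)|²]^{t/2} dy ≈ (s² + |z₁|² + |z₂|²)^{t/2}, with implicit constants depending only on n, N, t. -/
/-!
Write `F y = s² + ‖z₁ + y • (z₂ - z₁)‖²` and `M = s² + ‖z₁‖² + ‖z₂‖²`. On `[0, 1]` convexity
gives `F ≤ M`, and completing the square, `F y = e + a (y - y₀)²` with `e, a ≥ 0`, gives a point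
`c ∈ [0, 1]` with `M (y - c)² ≤ 2 F y`. Since `x ↦ x ^ (t / 2)` is monotone (increasing or
decreasing according to the sign of `t`), the integral of `F ^ (t / 2)` lies between multiples of
`M ^ (t / 2)` and of `M ^ (t / 2) ∫₀¹ |y - c| ^ t`, and for `t > -1` the last integral is bounded
above and below by constants depending only on `t`.
-/

open MeasureTheory intervalIntegral Set Real
open scoped Interval

theorem integral_le_integral_le_of_ae_between {μ : Measure ℝ} {f g h : ℝ → ℝ} {a b : ℝ}
    (hab : a ≤ b) (hf : AEStronglyMeasurable f (μ.restrict (Ι a b)))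
    (hg : IntervalIntegrable g μ a b) (hh : IntervalIntegrable h μ a b)
    (hgfh : ∀ᵐ y ∂μ, y ∈ Icc a b → g y ≤ f y ∧ f y ≤ h y) :
    ∫ y in a..b, g y ∂μ ≤ ∫ y in a..b, f y ∂μ ∧ ∫ y in a..b, f y ∂μ ≤ ∫ y in a..b, h y ∂μ := by
  have hIcc := (ae_restrict_iff' measurableSet_Icc).2 hgfh
  have hIoc : ∀ᵐ y ∂μ.restrict (Ι a b), g y ≤ f y ∧ f y ≤ h y :=
    ae_restrict_of_ae_restrict_of_subset (uIoc_of_le hab ▸ Ioc_subset_Icc_self) hIcc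
  have hfi : IntervalIntegrable f μ a b :=
    (hg.norm.add hh.norm).mono_fun' hf <| hIoc.mono fun y ⟨hgf, hfh⟩ => by
      simp only [norm_eq_abs]
      exact abs_le.2 ⟨by linarith [neg_abs_le (g y), abs_nonneg (h y)],
        by linarith [le_abs_self (h y), abs_nonneg (g y)]⟩
  exact ⟨integral_mono_ae_restrict hab hg hfi (hIcc.mono fun _ hy => hy.1),
    integral_mono_ae_restrict hab hfi hh (hIcc.mono fun _ hy => hy.2)⟩

theorem mul_sq_rpow {a : ℝ} (ha : 0 ≤ a) (x r : ℝ) : (a * x ^ 2) ^ r = a ^ r * |x| ^ (2 * r) := by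
  rw [mul_rpow ha (sq_nonneg _), ← sq_abs x, ← rpow_natCast |x| 2, ← rpow_mul (abs_nonneg _)]
  norm_num

section AbsRpow

variable {q : ℝ}

theorem intervalIntegrable_abs_rpow (hq : -1 < q) (a b : ℝ) :
    IntervalIntegrable (fun u => |u| ^ q) volume a b := by
  have hpos := (intervalIntegrable_rpow' hq (a := a) (b := b)).norm
  have hneg : IntervalIntegrable (fun u => ‖(-u) ^ q‖) volume a b := by
    simpa using
      ((IntervalIntegrable.iff_comp_neg).mp (intervalIntegrable_rpow' hq (a := -a) (b := -b))).norm
  refine (hpos.add hneg).mono_fun' (measurable_abs.pow_const q).aestronglyMeasurable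
    (ae_of_all _ fun u => ?_)
  rcases le_total 0 u with hu | hu
  · simp [abs_of_nonneg hu, abs_of_nonneg (rpow_nonneg hu q)]
  · simp [abs_of_nonpos hu, abs_of_nonneg (rpow_nonneg (neg_nonneg.2 hu) q)]

theorem integral_abs_rpow_of_nonneg (hq : -1 < q) {x : ℝ} (hx : 0 ≤ x) :
    ∫ u in (0:ℝ)..x, |u| ^ q = x ^ (q + 1) / (q + 1) := by
  rw [integral_congr (g := fun u => u ^ q) fun u hu => ?_, integral_rpow (.inl hq),
    zero_rpow (by linarith), sub_zero]
  rw [uIcc_of_le hx] at hu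
  simp [abs_of_nonneg hu.1]

theorem integral_abs_sub_rpow (hq : -1 < q) {c : ℝ} (hc : c ∈ Icc (0:ℝ) 1) :
    ∫ y in (0:ℝ)..1, |y - c| ^ q = (c ^ (q + 1) + (1 - c) ^ (q + 1)) / (q + 1) := by
  have hleft : ∫ u in -c..0, |u| ^ q = c ^ (q + 1) / (q + 1) := by
    rw [← integral_abs_rpow_of_nonneg hq hc.1, ← neg_zero, ← integral_comp_neg]
    simp
  rw [integral_comp_sub_right (fun u => |u| ^ q), zero_sub,
    ← integral_add_adjacent_intervals (b := 0) (intervalIntegrable_abs_rpow hq _ _)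
      (intervalIntegrable_abs_rpow hq _ _), hleft,
    integral_abs_rpow_of_nonneg hq (sub_nonneg.2 hc.2), add_div]

theorem integral_abs_sub_rpow_le (hq : -1 < q) {c : ℝ} (hc : c ∈ Icc (0:ℝ) 1) :
    ∫ y in (0:ℝ)..1, |y - c| ^ q ≤ 2 / (q + 1) := by
  have hq' : 0 < q + 1 := by linarith
  rw [integral_abs_sub_rpow hq hc]
  gcongr
  linarith [rpow_le_one hc.1 hc.2 hq'.le,
    rpow_le_one (sub_nonneg.2 hc.2) (by linarith [hc.1]) hq'.le]

theorem le_integral_abs_sub_rpow (hq : -1 < q) {c : ℝ} (hc : c ∈ Icc (0:ℝ) 1) :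
    (1 / 2) ^ (q + 1) / (q + 1) ≤ ∫ y in (0:ℝ)..1, |y - c| ^ q := by
  have hq' : 0 < q + 1 := by linarith
  have h₁ := rpow_nonneg hc.1 (q + 1)
  have h₂ := rpow_nonneg (sub_nonneg.2 hc.2) (q + 1)
  rw [integral_abs_sub_rpow hq hc]
  gcongr
  rcases le_total (1 / 2) c with h | h
  · linarith [rpow_le_rpow (by norm_num) h hq'.le]
  · linarith [rpow_le_rpow (by norm_num) (by linarith : (1:ℝ) / 2 ≤ 1 - c) hq'.le]

theorem intervalIntegrable_abs_sub_rpow (hq : -1 < q) (c a b : ℝ) :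
    IntervalIntegrable (fun y => |y - c| ^ q) volume a b := by
  simpa using (intervalIntegrable_abs_rpow hq (a - c) (b - c)).comp_sub_right c

end AbsRpow

section Sandwich

variable {f : ℝ → ℝ} {L c r : ℝ}

theorem integral_rpow_bounds_of_nonneg (hr : 0 ≤ r) (hL : 0 ≤ L) (hf : Measurable f)
    (hfL : ∀ y ∈ Icc (0:ℝ) 1, L * (y - c) ^ 2 ≤ 2 * f y ∧ f y ≤ L) :
    (L / 2) ^ r * ∫ y in (0:ℝ)..1, |y - c| ^ (2 * r) ≤ ∫ y in (0:ℝ)..1, f y ^ r ∧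
      ∫ y in (0:ℝ)..1, f y ^ r ≤ L ^ r := by
  have key := integral_le_integral_le_of_ae_between zero_le_one
    (hf.pow_const r).aestronglyMeasurable
    ((intervalIntegrable_abs_sub_rpow (q := 2 * r) (by linarith) c 0 1).const_mul ((L / 2) ^ r))
    (intervalIntegrable_const (c := L ^ r)) (ae_of_all _ fun y hy => ?_)
  · simpa only [intervalIntegral.integral_const_mul, intervalIntegral.integral_const, sub_zero,
      one_smul] using key
  obtain ⟨hlow, hup⟩ := hfL y hy
  rw [← mul_sq_rpow (by positivity)]
  exact ⟨rpow_le_rpow (by positivity) (by linarith) hr,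
    rpow_le_rpow (by nlinarith [sq_nonneg (y - c)]) hup hr⟩

theorem integral_rpow_bounds_of_neg (hr : r < 0) (hr' : -1 < 2 * r) (hL : 0 < L)
    (hf : Measurable f) (hfL : ∀ y ∈ Icc (0:ℝ) 1, L * (y - c) ^ 2 ≤ 2 * f y ∧ f y ≤ L) :
    L ^ r ≤ ∫ y in (0:ℝ)..1, f y ^ r ∧
      ∫ y in (0:ℝ)..1, f y ^ r ≤ (L / 2) ^ r * ∫ y in (0:ℝ)..1, |y - c| ^ (2 * r) := by
  have key := integral_le_integral_le_of_ae_between zero_le_one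
    (hf.pow_const r).aestronglyMeasurable (intervalIntegrable_const (c := L ^ r))
    ((intervalIntegrable_abs_sub_rpow hr' c 0 1).const_mul ((L / 2) ^ r))
    ((Measure.ae_ne volume c).mono fun y hyc hy => ?_)
  · simpa only [intervalIntegral.integral_const_mul, intervalIntegral.integral_const, sub_zero,
      one_smul] using key
  obtain ⟨hlow, hup⟩ := hfL y hy
  have hpos : 0 < L / 2 * (y - c) ^ 2 := by
    have := sub_ne_zero.2 hyc
    positivity
  rw [← mul_sq_rpow (by positivity)]
  exact ⟨rpow_le_rpow_of_nonpos (by linarith) hup hr.le,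
    rpow_le_rpow_of_nonpos hpos (by linarith) hr.le⟩

theorem exists_integral_rpow_bounds (hr : -1 < 2 * r) :
    ∃ c₁ c₂ : ℝ, 0 < c₁ ∧ 0 < c₂ ∧ ∀ (f : ℝ → ℝ) (L c : ℝ), 0 < L → c ∈ Icc (0:ℝ) 1 →
      Measurable f → (∀ y ∈ Icc (0:ℝ) 1, L * (y - c) ^ 2 ≤ 2 * f y ∧ f y ≤ L) →
        c₁ * L ^ r ≤ ∫ y in (0:ℝ)..1, f y ^ r ∧ ∫ y in (0:ℝ)..1, f y ^ r ≤ c₂ * L ^ r := by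
  have hr₁ : 0 < 2 * r + 1 := by linarith
  rcases le_or_gt 0 r with hr₀ | hr₀
  · refine ⟨(1 / 2) ^ r * ((1 / 2) ^ (2 * r + 1) / (2 * r + 1)), 1, by positivity, one_pos,
      fun f L c hL hc hf hfL => ?_⟩
    obtain ⟨hlow, hup⟩ := integral_rpow_bounds_of_nonneg hr₀ hL.le hf hfL
    refine ⟨le_trans ?_ hlow, by simpa using hup⟩
    rw [div_eq_mul_one_div L, mul_rpow hL.le (by norm_num)]
    calc _ = L ^ r * (1 / 2) ^ r * ((1 / 2) ^ (2 * r + 1) / (2 * r + 1)) := by ring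
      _ ≤ _ := by gcongr; exact le_integral_abs_sub_rpow hr hc
  · refine ⟨1, (1 / 2) ^ r * (2 / (2 * r + 1)), one_pos, by positivity,
      fun f L c hL hc hf hfL => ?_⟩
    obtain ⟨hlow, hup⟩ := integral_rpow_bounds_of_neg hr₀ hr hL hf hfL
    refine ⟨by simpa using hlow, le_trans hup ?_⟩
    rw [div_eq_mul_one_div L, mul_rpow hL.le (by norm_num)]
    calc _ ≤ L ^ r * (1 / 2) ^ r * (2 / (2 * r + 1)) := by
          gcongr; exact integral_abs_sub_rpow_le hr hc
      _ = _ := by ring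

end Sandwich

theorem exists_mem_Icc_mul_sq_le {e a : ℝ} (he : 0 ≤ e) (ha : 0 ≤ a) (y₀ : ℝ) :
    ∃ c ∈ Icc (0:ℝ) 1, ∀ y ∈ Icc (0:ℝ) 1,
      (2 * e + a * (y₀ ^ 2 + (1 - y₀) ^ 2)) * (y - c) ^ 2 ≤ 2 * (e + a * (y - y₀) ^ 2) := by
  rcases lt_or_ge y₀ 0 with h₀ | h₀
  · refine ⟨0, by simp, fun y ⟨hy₀, hy₁⟩ => ?_⟩
    have : y₀ ^ 2 * y ^ 2 + (1 - y₀) ^ 2 * y ^ 2 ≤ 2 * (y - y₀) ^ 2 := by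
      nlinarith [mul_le_mul_of_nonneg_left hy₁ (by positivity : 0 ≤ y₀ ^ 2 * y),
        mul_nonneg hy₀ (sub_nonneg.2 hy₁)]
    nlinarith [mul_le_mul_of_nonneg_left this ha, mul_nonneg he (mul_nonneg hy₀ (sub_nonneg.2 hy₁))]
  rcases le_or_gt y₀ 1 with h₁ | h₁
  · refine ⟨y₀, ⟨h₀, h₁⟩, fun y ⟨hy₀, hy₁⟩ => ?_⟩
    have hd : (y - y₀) ^ 2 ≤ 1 := by nlinarith
    have hs : y₀ ^ 2 + (1 - y₀) ^ 2 ≤ 1 := by nlinarith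
    nlinarith [mul_le_mul_of_nonneg_left hd he, mul_le_mul_of_nonneg_left hs ha,
      mul_nonneg ha (sq_nonneg (y - y₀)), sq_nonneg (y - y₀)]
  · refine ⟨1, by simp, fun y ⟨hy₀, hy₁⟩ => ?_⟩
    have : y₀ ^ 2 * (y - 1) ^ 2 + (1 - y₀) ^ 2 * (y - 1) ^ 2 ≤ 2 * (y - y₀) ^ 2 := by
      nlinarith [mul_nonneg hy₀ (sub_nonneg.2 hy₁),
        mul_nonneg (sub_nonneg.2 hy₁) (sub_nonneg.2 h₁.le),
        mul_nonneg hy₀ (sub_nonneg.2 h₁.le)]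
    nlinarith [mul_le_mul_of_nonneg_left this ha, mul_nonneg he (mul_nonneg hy₀ (sub_nonneg.2 hy₁))]

section InnerProductSpace

variable {E : Type*} [NormedAddCommGroup E] [InnerProductSpace ℝ E]

theorem exists_norm_add_smul_sq_eq (p v : E) :
    ∃ y₀ : ℝ, ∀ y : ℝ, ‖p + y • v‖ ^ 2 = ‖p + y₀ • v‖ ^ 2 + ‖v‖ ^ 2 * (y - y₀) ^ 2 := by
  rcases eq_or_ne v 0 with rfl | hv
  · exact ⟨0, by simp⟩
  have hv' : ‖v‖ ^ 2 ≠ 0 := by positivity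
  set y₀ := -inner ℝ p v / ‖v‖ ^ 2
  have horth : inner ℝ (p + y₀ • v) v = 0 := by
    rw [inner_add_left, real_inner_smul_left, real_inner_self_eq_norm_sq, div_mul_cancel₀ _ hv',
      add_neg_cancel]
  refine ⟨y₀, fun y => ?_⟩
  rw [show p + y • v = (p + y₀ • v) + (y - y₀) • v by rw [sub_smul]; abel, norm_add_sq_real,
    real_inner_smul_right, horth, norm_smul, mul_pow, norm_eq_abs, sq_abs]
  ring

theorem norm_add_smul_sub_sq_le (z₁ z₂ : E) {y : ℝ} (hy : y ∈ Icc (0:ℝ) 1) :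
    ‖z₁ + y • (z₂ - z₁)‖ ^ 2 ≤ ‖z₁‖ ^ 2 + ‖z₂‖ ^ 2 := by
  obtain ⟨hy₀, hy₁⟩ := hy
  have hconv : ‖z₁ + y • (z₂ - z₁)‖ ≤ (1 - y) * ‖z₁‖ + y * ‖z₂‖ := by
    calc ‖z₁ + y • (z₂ - z₁)‖ = ‖(1 - y) • z₁ + y • z₂‖ := by
          rw [smul_sub, sub_smul, one_smul]; abel_nf
      _ ≤ (1 - y) * ‖z₁‖ + y * ‖z₂‖ := by
          refine (norm_add_le _ _).trans_eq ?_
          rw [norm_smul, norm_smul, norm_of_nonneg (by linarith), norm_of_nonneg hy₀]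
  have := norm_nonneg z₁
  have := norm_nonneg z₂
  nlinarith [pow_le_pow_left₀ (norm_nonneg _) hconv 2, mul_nonneg hy₀ (sub_nonneg.2 hy₁),
    sq_nonneg (‖z₁‖ - ‖z₂‖)]

theorem exists_sq_add_norm_segment_sq_bounds (s : ℝ) (z₁ z₂ : E) :
    ∃ c ∈ Icc (0:ℝ) 1, ∀ y ∈ Icc (0:ℝ) 1,
      (s ^ 2 + ‖z₁‖ ^ 2 + ‖z₂‖ ^ 2) * (y - c) ^ 2 ≤ 2 * (s ^ 2 + ‖z₁ + y • (z₂ - z₁)‖ ^ 2) ∧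
        s ^ 2 + ‖z₁ + y • (z₂ - z₁)‖ ^ 2 ≤ s ^ 2 + ‖z₁‖ ^ 2 + ‖z₂‖ ^ 2 := by
  obtain ⟨y₀, hy₀⟩ := exists_norm_add_smul_sq_eq z₁ (z₂ - z₁)
  set e := s ^ 2 + ‖z₁ + y₀ • (z₂ - z₁)‖ ^ 2
  have h₀ := hy₀ 0
  have h₁ := hy₀ 1
  simp only [zero_smul, add_zero, one_smul, add_sub_cancel] at h₀ h₁
  obtain ⟨c, hc, hcy⟩ := exists_mem_Icc_mul_sq_le (e := e) (by positivity) (sq_nonneg ‖z₂ - z₁‖) y₀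
  refine ⟨c, hc, fun y hy => ⟨?_, by linarith [norm_add_smul_sub_sq_le z₁ z₂ hy]⟩⟩
  have hL : 2 * e + ‖z₂ - z₁‖ ^ 2 * (y₀ ^ 2 + (1 - y₀) ^ 2) = 2 * s ^ 2 + ‖z₁‖ ^ 2 + ‖z₂‖ ^ 2 := by
    linear_combination -(h₀ + h₁)
  calc (s ^ 2 + ‖z₁‖ ^ 2 + ‖z₂‖ ^ 2) * (y - c) ^ 2
      ≤ (2 * e + ‖z₂ - z₁‖ ^ 2 * (y₀ ^ 2 + (1 - y₀) ^ 2)) * (y - c) ^ 2 := by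
        rw [hL]; gcongr; nlinarith [sq_nonneg s]
    _ ≤ _ := by rw [hy₀ y]; linarith [hcy y hy]

end InnerProductSpace

theorem stmt5 (N n : ℕ) (t : ℝ) (ht : -1 < t) :
    ∃ c₁ c₂ : ℝ, 0 < c₁ ∧ 0 < c₂ ∧
      ∀ (s : ℝ), s ∈ Set.Icc (0 : ℝ) 1 →
        ∀ z₁ z₂ : EuclideanSpace ℝ (Fin N × Fin n), 0 < s + ‖z₁‖ + ‖z₂‖ →
          c₁ * (s ^ 2 + ‖z₁‖ ^ 2 + ‖z₂‖ ^ 2) ^ (t / 2) ≤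
            (∫ y in (0:ℝ)..1, (s ^ 2 + ‖z₁ + y • (z₂ - z₁)‖ ^ 2) ^ (t / 2)) ∧
          (∫ y in (0:ℝ)..1, (s ^ 2 + ‖z₁ + y • (z₂ - z₁)‖ ^ 2) ^ (t / 2)) ≤
            c₂ * (s ^ 2 + ‖z₁‖ ^ 2 + ‖z₂‖ ^ 2) ^ (t / 2) := by
  obtain ⟨c₁, c₂, hc₁, hc₂, hbounds⟩ := exists_integral_rpow_bounds (r := t / 2) (by linarith)
  refine ⟨c₁, c₂, hc₁, hc₂, fun s _ z₁ z₂ hpos => ?_⟩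
  have hM : 0 < s ^ 2 + ‖z₁‖ ^ 2 + ‖z₂‖ ^ 2 := by
    nlinarith [mul_pos hpos hpos, sq_nonneg (s - ‖z₁‖), sq_nonneg (s - ‖z₂‖),
      sq_nonneg (‖z₁‖ - ‖z₂‖)]
  obtain ⟨c, hc, hsandwich⟩ := exists_sq_add_norm_segment_sq_bounds s z₁ z₂
  exact hbounds _ _ c hM hc (by fun_prop) hsandwich
end

section
/- Equivalence of p-excess and quadratic V-excess: for p ≥ 2 there are constants c₁, c₂ > 0 depending on n, N, p such that for every ball B_ρ(x₀) and every w ∈ W^{1,p}(B_ρ(x₀); ℝ^N), c₁ 𝓔(w; B_ρ(x₀))^{p/2} ≤ 𝓔̃(w; B_ρ(x₀)) ≤ c₂ 𝓔(w; B_ρ(x₀))^{p/2}, where 𝓔(w; B) := (⨍_B |(Dw)_B|^{p−2}|Dw − (Dw)_B|² + |Dw − (Dw)_B|^p dx)^{1/p} and 𝓔̃(w; B) := (⨍_B |V(Dw) − (V(Dw))_B|² dx)^{1/2} with V(z) = |z|^{(p−2)/2} z. -/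
/-
Pointwise, `‖V z - V w‖²` is comparable to `(‖z‖ + ‖w‖) ^ (p - 2) ‖z - w‖²`, hence to the shifted
power `φ_{‖w‖}(‖z - w‖) = ‖w‖ ^ (p - 2) ‖z - w‖² + ‖z - w‖ ^ p`. The upper estimate is a mean value
argument for `t ↦ t ^ β`; the lower one is the same estimate for the inverse map
`V⁻¹ z = ‖z‖ ^ ((2 - p) / p) • z`, whose exponent lies in `(-1, 0]`.

Both excesses are taken around a mean, and the mean is a quasi-minimiser:
`⨍ ‖f - (f)_B‖² ≤ 4 ⨍ ‖f - c‖²` for every `c`, and, by a change of shift and Jensen's inequality,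
`⨍ φ_{‖(g)_B‖}(‖g - (g)_B‖) ≤ C ⨍ φ_{‖c‖}(‖g - c‖)`. Comparing with `c = V((Dw)_B)` gives the upper
bound, and with `c = V⁻¹((V(Dw))_B)` the lower one.
-/

open MeasureTheory Real Set

noncomputable def Vmap {n N : ℕ} (p : ℝ)
    (z : EuclideanSpace ℝ (Fin n) →L[ℝ] EuclideanSpace ℝ (Fin N)) :
    EuclideanSpace ℝ (Fin n) →L[ℝ] EuclideanSpace ℝ (Fin N) :=
  (‖z‖ ^ ((p - 2) / 2)) • z

lemma add_rpow_le_two_rpow_mul {q x y : ℝ} (hq : 0 ≤ q) (hx : 0 ≤ x) (hy : 0 ≤ y) :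
    (x + y) ^ q ≤ 2 ^ q * (x ^ q + y ^ q) := calc
  (x + y) ^ q ≤ (2 * max x y) ^ q := by
    rw [two_mul]; gcongr <;> simp
  _ = 2 ^ q * max (x ^ q) (y ^ q) := by
    rw [mul_rpow zero_le_two (le_max_of_le_left hx)]
    rcases le_total x y with h | h
    · rw [max_eq_right h, max_eq_right (rpow_le_rpow hx h hq)]
    · rw [max_eq_left h, max_eq_left (rpow_le_rpow hy h hq)]
  _ ≤ 2 ^ q * (x ^ q + y ^ q) := by
    gcongr; exact max_le_add_of_nonneg (by positivity) (by positivity)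

lemma abs_rpow_sub_rpow_le {β s t : ℝ} (hs : 0 < s) (hst : s ≤ t) :
    |t ^ β - s ^ β| ≤ |β| * max (s ^ (β - 1)) (t ^ (β - 1)) * (t - s) := by
  have hderiv : ∀ x ∈ Icc s t,
      HasDerivWithinAt (fun x : ℝ => x ^ β) (β * x ^ (β - 1)) (Icc s t) x :=
    fun x hx => (hasDerivAt_rpow_const (Or.inl (hs.trans_le hx.1).ne')).hasDerivWithinAt
  have hbound : ∀ x ∈ Icc s t, ‖β * x ^ (β - 1)‖ ≤ |β| * max (s ^ (β - 1)) (t ^ (β - 1)) := by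
    intro x hx
    have hx0 : 0 < x := hs.trans_le hx.1
    rw [norm_mul, Real.norm_eq_abs, Real.norm_of_nonneg (rpow_nonneg hx0.le _)]
    gcongr
    rcases le_total 0 (β - 1) with h | h
    · exact le_max_of_le_right (rpow_le_rpow hx0.le hx.2 h)
    · exact le_max_of_le_left (rpow_le_rpow_of_nonpos hs hx.1 h)
  simpa [Real.norm_eq_abs, abs_of_nonneg (sub_nonneg.2 hst)] using
    Convex.norm_image_sub_le_of_norm_hasDerivWithin_le hderiv hbound (convex_Icc s t)
      (left_mem_Icc.2 hst) (right_mem_Icc.2 hst)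

lemma rpow_le_two_rpow_abs_mul_rpow {β s t : ℝ} (hs : 0 < s) (hst : s ≤ t) (hts : t ≤ 2 * s) :
    s ^ β ≤ 2 ^ |β| * t ^ β := by
  rcases le_total 0 β with hβ | hβ
  · calc s ^ β ≤ t ^ β := rpow_le_rpow hs.le hst hβ
      _ ≤ 2 ^ |β| * t ^ β := le_mul_of_one_le_left (rpow_nonneg (hs.le.trans hst) β)
          (one_le_rpow one_le_two (abs_nonneg β))
  · calc s ^ β ≤ (t / 2) ^ β := rpow_le_rpow_of_nonpos (by linarith) (by linarith) hβ
      _ = 2 ^ |β| * t ^ β := by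
        rw [div_rpow (by linarith) zero_le_two, abs_of_nonpos hβ, rpow_neg zero_le_two]
        ring

lemma rpow_mul_self_le_rpow_mul_self {β x y : ℝ} (hβ : -1 ≤ β) (hx : 0 ≤ x) (hxy : x ≤ y) :
    x ^ β * x ≤ y ^ β * y := by
  rcases hx.eq_or_lt with rfl | hx
  · rw [mul_zero]; exact mul_nonneg (rpow_nonneg hxy _) hxy
  · rw [← rpow_add_one hx.ne', ← rpow_add_one (hx.trans_le hxy).ne']
    exact rpow_le_rpow hx.le hxy (by linarith)

lemma rpow_sub_one_mul_self {β x : ℝ} (hx : 0 < x) : x ^ (β - 1) * x = x ^ β := by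
  rw [rpow_sub_one hx.ne', div_mul_cancel₀ _ hx.ne']

section NormPowSMul

variable {E : Type*} [NormedAddCommGroup E] [NormedSpace ℝ E]

noncomputable def normPowSMul (β : ℝ) (z : E) : E := ‖z‖ ^ β • z

lemma norm_normPowSMul (β : ℝ) (z : E) : ‖normPowSMul β z‖ = ‖z‖ ^ β * ‖z‖ := by
  rw [normPowSMul, norm_smul, Real.norm_of_nonneg (by positivity)]

lemma normPowSMul_normPowSMul {β γ : ℝ} (h : (γ + 1) * β + γ = 0) (z : E) :
    normPowSMul β (normPowSMul γ z) = z := by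
  rcases eq_or_ne z 0 with rfl | hz
  · simp [normPowSMul]
  have hz0 : 0 < ‖z‖ := norm_pos_iff.2 hz
  rw [normPowSMul, norm_normPowSMul, normPowSMul, smul_smul, ← rpow_add_one hz0.ne',
    ← rpow_mul hz0.le, ← rpow_add hz0, h, rpow_zero, one_smul]

lemma norm_normPowSMul_sub_le {β : ℝ} (hβ : -1 ≤ β) {z w : E} (h : ‖w‖ ≤ ‖z‖) :
    ‖normPowSMul β z - normPowSMul β w‖ ≤ (4 + |β| * 2 ^ |β|) * ‖z‖ ^ β * ‖z - w‖ := by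
  have hzβ : 0 ≤ ‖z‖ ^ β := by positivity
  have hC : 0 ≤ |β| * 2 ^ |β| := by positivity
  rcases le_or_gt ‖z‖ (2 * ‖z - w‖) with hfar | hnear
  · calc ‖normPowSMul β z - normPowSMul β w‖ ≤ ‖z‖ ^ β * ‖z‖ + ‖w‖ ^ β * ‖w‖ := by
          rw [← norm_normPowSMul, ← norm_normPowSMul]; exact norm_sub_le _ _
      _ ≤ 2 * (‖z‖ ^ β * ‖z‖) := by
          linarith [rpow_mul_self_le_rpow_mul_self hβ (norm_nonneg w) h]
      _ ≤ 4 * ‖z‖ ^ β * ‖z - w‖ := by nlinarith [mul_le_mul_of_nonneg_left hfar hzβ]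
      _ ≤ (4 + |β| * 2 ^ |β|) * ‖z‖ ^ β * ‖z - w‖ := by gcongr; linarith
  have hw : ‖z‖ ≤ 2 * ‖w‖ := by linarith [norm_sub_norm_le z w]
  have hw0 : 0 < ‖w‖ := by linarith [norm_nonneg (z - w)]
  have hz0 : 0 < ‖z‖ := hw0.trans_le h
  have hmax : max (‖w‖ ^ (β - 1)) (‖z‖ ^ (β - 1)) * ‖w‖ ≤ 2 ^ |β| * ‖z‖ ^ β := by
    rw [max_mul_of_nonneg _ _ (norm_nonneg w)]
    refine max_le ?_ ?_
    · rw [rpow_sub_one_mul_self hw0]; exact rpow_le_two_rpow_abs_mul_rpow hw0 h hw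
    · calc ‖z‖ ^ (β - 1) * ‖w‖ ≤ ‖z‖ ^ (β - 1) * ‖z‖ := by gcongr
        _ = ‖z‖ ^ β := rpow_sub_one_mul_self hz0
        _ ≤ 2 ^ |β| * ‖z‖ ^ β :=
          le_mul_of_one_le_left hzβ (one_le_rpow one_le_two (abs_nonneg β))
  have hdecomp : normPowSMul β z - normPowSMul β w
      = ‖z‖ ^ β • (z - w) + (‖z‖ ^ β - ‖w‖ ^ β) • w := by
    simp only [normPowSMul, smul_sub, sub_smul]; abel
  calc ‖normPowSMul β z - normPowSMul β w‖
      ≤ ‖z‖ ^ β * ‖z - w‖ + |‖z‖ ^ β - ‖w‖ ^ β| * ‖w‖ := by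
        rw [hdecomp]
        refine (norm_add_le _ _).trans_eq ?_
        rw [norm_smul, norm_smul, Real.norm_of_nonneg hzβ, Real.norm_eq_abs]
    _ ≤ ‖z‖ ^ β * ‖z - w‖
        + |β| * (max (‖w‖ ^ (β - 1)) (‖z‖ ^ (β - 1)) * ‖w‖) * ‖z - w‖ := by
        have hM : 0 ≤ |β| * (max (‖w‖ ^ (β - 1)) (‖z‖ ^ (β - 1)) * ‖w‖) := by positivity
        have h1 := mul_le_mul_of_nonneg_right (abs_rpow_sub_rpow_le (β := β) hw0 h) hw0.le
        have h2 := mul_le_mul_of_nonneg_left (norm_sub_norm_le z w) hM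
        linarith
    _ ≤ ‖z‖ ^ β * ‖z - w‖ + |β| * (2 ^ |β| * ‖z‖ ^ β) * ‖z - w‖ := by gcongr
    _ ≤ (4 + |β| * 2 ^ |β|) * ‖z‖ ^ β * ‖z - w‖ := by
        nlinarith [mul_nonneg hzβ (norm_nonneg (z - w))]

lemma norm_normPowSMul_sub_le_add_rpow {α : ℝ} (hα : 0 ≤ α) (z w : E) :
    ‖normPowSMul α z - normPowSMul α w‖ ≤ (4 + α * 2 ^ α) * (‖z‖ + ‖w‖) ^ α * ‖z - w‖ := by
  wlog h : ‖w‖ ≤ ‖z‖ generalizing z w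
  · rw [norm_sub_rev, add_comm ‖z‖, norm_sub_rev z]; exact this w z (le_of_not_ge h)
  have key := norm_normPowSMul_sub_le (by linarith : -1 ≤ α) h
  rw [abs_of_nonneg hα] at key
  refine key.trans ?_
  gcongr
  linarith [norm_nonneg w]

lemma exists_add_rpow_mul_norm_sub_le {α : ℝ} (hα : 0 ≤ α) : ∃ C > 0, ∀ z w : E,
    (‖z‖ + ‖w‖) ^ α * ‖z - w‖ ≤ C * ‖normPowSMul α z - normPowSMul α w‖ := by
  set γ := -α / (α + 1) with hγdef
  have hγ : -1 ≤ γ := by rw [le_div_iff₀ (by linarith)]; linarith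
  have hinv : (α + 1) * γ + α = 0 := by rw [hγdef]; field_simp; ring
  set C := 4 + |γ| * 2 ^ |γ|
  refine ⟨2 ^ α * C, by positivity, fun z w => ?_⟩
  wlog h : ‖w‖ ≤ ‖z‖ generalizing z w
  · rw [norm_sub_rev, add_comm, norm_sub_rev (normPowSMul α z)]
    exact this w z (le_of_not_ge h)
  rcases (norm_nonneg z).eq_or_lt with hz | hz
  · obtain rfl : z = 0 := norm_eq_zero.1 hz.symm
    obtain rfl : w = 0 := norm_le_zero_iff.1 (h.trans hz.ge)
    simp
  have hVwz : ‖normPowSMul α w‖ ≤ ‖normPowSMul α z‖ := by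
    rw [norm_normPowSMul, norm_normPowSMul]
    exact rpow_mul_self_le_rpow_mul_self (by linarith) (norm_nonneg w) h
  have key := norm_normPowSMul_sub_le hγ hVwz
  rw [normPowSMul_normPowSMul hinv, normPowSMul_normPowSMul hinv] at key
  have hnorm : ‖normPowSMul α z‖ ^ γ * ‖z‖ ^ α = 1 := by
    rw [norm_normPowSMul, ← rpow_add_one hz.ne', ← rpow_mul hz.le, ← rpow_add hz, hinv,
      rpow_zero]
  calc (‖z‖ + ‖w‖) ^ α * ‖z - w‖ ≤ (2 * ‖z‖) ^ α * ‖z - w‖ := by gcongr; linarith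
    _ = 2 ^ α * ‖z‖ ^ α * ‖z - w‖ := by rw [mul_rpow zero_le_two hz.le]
    _ ≤ 2 ^ α * ‖z‖ ^ α * (C * ‖normPowSMul α z‖ ^ γ * ‖normPowSMul α z - normPowSMul α w‖) := by
        gcongr
    _ = 2 ^ α * C * ‖normPowSMul α z - normPowSMul α w‖ := by
        linear_combination (2 ^ α * C * ‖normPowSMul α z - normPowSMul α w‖) * hnorm

end NormPowSMul

/-- Up to constants, the shifted N-function `φ_a(t) ≈ (a + t) ^ (p - 2) t²` of `t ↦ t ^ p`. -/
noncomputable def shiftedPhi (p a t : ℝ) : ℝ := a ^ (p - 2) * t ^ 2 + t ^ p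

section ShiftedPhi

variable {p : ℝ}

lemma rpow_sub_two_mul_sq (hp : 2 ≤ p) {t : ℝ} (ht : 0 ≤ t) : t ^ (p - 2) * t ^ 2 = t ^ p := by
  rw [← rpow_natCast, ← rpow_add' ht (by norm_num; linarith)]
  norm_num

lemma rpow_div_two_sq {q t : ℝ} (ht : 0 ≤ t) : (t ^ (q / 2)) ^ 2 = t ^ q := by
  rw [← rpow_mul_natCast ht]; norm_num

lemma shiftedPhi_nonneg (p : ℝ) {a t : ℝ} (ha : 0 ≤ a) (ht : 0 ≤ t) : 0 ≤ shiftedPhi p a t := by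
  unfold shiftedPhi; positivity

lemma shiftedPhi_le_two_mul (hp : 2 ≤ p) {a t S : ℝ} (ha : 0 ≤ a) (ht : 0 ≤ t) (haS : a ≤ S)
    (htS : t ≤ S) : shiftedPhi p a t ≤ 2 * (S ^ (p - 2) * t ^ 2) := by
  have h1 : a ^ (p - 2) * t ^ 2 ≤ S ^ (p - 2) * t ^ 2 := by gcongr
  have h2 : t ^ p ≤ S ^ (p - 2) * t ^ 2 := by
    rw [← rpow_sub_two_mul_sq hp ht]; gcongr
  unfold shiftedPhi; linarith

lemma rpow_mul_sq_le_shiftedPhi (hp : 2 ≤ p) {a t S : ℝ} (ha : 0 ≤ a) (ht : 0 ≤ t) (hS : 0 ≤ S)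
    (hSat : S ≤ 2 * (a + t)) : S ^ (p - 2) * t ^ 2 ≤ 4 ^ (p - 2) * shiftedPhi p a t := by
  have hq : 0 ≤ p - 2 := by linarith
  have hS' : S ^ (p - 2) ≤ 4 ^ (p - 2) * (a ^ (p - 2) + t ^ (p - 2)) := calc
    S ^ (p - 2) ≤ (2 * (a + t)) ^ (p - 2) := by gcongr
    _ = 2 ^ (p - 2) * (a + t) ^ (p - 2) := mul_rpow zero_le_two (by positivity)
    _ ≤ 2 ^ (p - 2) * (2 ^ (p - 2) * (a ^ (p - 2) + t ^ (p - 2))) := by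
        gcongr; exact add_rpow_le_two_rpow_mul hq ha ht
    _ = 4 ^ (p - 2) * (a ^ (p - 2) + t ^ (p - 2)) := by
        rw [← mul_assoc, ← mul_rpow zero_le_two zero_le_two]; norm_num
  calc S ^ (p - 2) * t ^ 2 ≤ 4 ^ (p - 2) * (a ^ (p - 2) + t ^ (p - 2)) * t ^ 2 := by gcongr
    _ = 4 ^ (p - 2) * shiftedPhi p a t := by
        rw [shiftedPhi, ← rpow_sub_two_mul_sq hp ht]; ring

lemma rpow_sub_two_mul_sq_le_add (hp : 2 ≤ p) {u v : ℝ} (hu : 0 ≤ u) (hv : 0 ≤ v) :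
    v ^ (p - 2) * u ^ 2 ≤ v ^ p + u ^ p := by
  have hvp : 0 ≤ v ^ p := by positivity
  have hup : 0 ≤ u ^ p := by positivity
  rcases le_total v u with h | h
  · have : v ^ (p - 2) * u ^ 2 ≤ u ^ (p - 2) * u ^ 2 := by gcongr
    rw [rpow_sub_two_mul_sq hp hu] at this; linarith
  · have : v ^ (p - 2) * u ^ 2 ≤ v ^ (p - 2) * v ^ 2 := by gcongr
    rw [rpow_sub_two_mul_sq hp hv] at this; linarith

lemma shiftedPhi_le_of_le_add (hp : 2 ≤ p) {a b t u v : ℝ} (ha : 0 ≤ a) (hb : 0 ≤ b)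
    (ht : 0 ≤ t) (hu : 0 ≤ u) (hv : 0 ≤ v) (hab : a ≤ b + v) (htu : t ≤ u + v) :
    shiftedPhi p a t ≤ 5 * 2 ^ p * (shiftedPhi p b u + shiftedPhi p b v) := by
  have hq : 0 ≤ p - 2 := by linarith
  have ha' : a ^ (p - 2) ≤ 2 ^ p * (b ^ (p - 2) + v ^ (p - 2)) := calc
    a ^ (p - 2) ≤ (b + v) ^ (p - 2) := by gcongr
    _ ≤ 2 ^ (p - 2) * (b ^ (p - 2) + v ^ (p - 2)) := add_rpow_le_two_rpow_mul hq hb hv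
    _ ≤ 2 ^ p * (b ^ (p - 2) + v ^ (p - 2)) := mul_le_mul_of_nonneg_right
        (rpow_le_rpow_of_exponent_le one_le_two (by linarith)) (by positivity)
  have ht2 : t ^ 2 ≤ 2 * (u ^ 2 + v ^ 2) := by nlinarith [sq_nonneg (u - v)]
  have htp : t ^ p ≤ 2 ^ p * (u ^ p + v ^ p) :=
    (rpow_le_rpow ht htu (by linarith)).trans (add_rpow_le_two_rpow_mul (by linarith) hu hv)
  have hcross := mul_le_mul_of_nonneg_left (rpow_sub_two_mul_sq_le_add hp hu hv)
    (by positivity : (0 : ℝ) ≤ 2 * 2 ^ p)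
  have hmul : a ^ (p - 2) * t ^ 2 ≤ 2 * 2 ^ p * (b ^ (p - 2) * u ^ 2 + b ^ (p - 2) * v ^ 2
      + v ^ (p - 2) * u ^ 2 + v ^ (p - 2) * v ^ 2) := calc
    a ^ (p - 2) * t ^ 2 ≤ 2 ^ p * (b ^ (p - 2) + v ^ (p - 2)) * (2 * (u ^ 2 + v ^ 2)) := by
      gcongr
    _ = _ := by ring
  rw [rpow_sub_two_mul_sq hp hv] at hmul
  calc shiftedPhi p a t
      ≤ 2 ^ p * (2 * (b ^ (p - 2) * u ^ 2) + 2 * (b ^ (p - 2) * v ^ 2) + 3 * u ^ p + 5 * v ^ p) := by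
        unfold shiftedPhi; linarith
    _ ≤ 2 ^ p * (5 * (shiftedPhi p b u + shiftedPhi p b v)) := by
        have : 0 ≤ b ^ (p - 2) * u ^ 2 := by positivity
        have : 0 ≤ b ^ (p - 2) * v ^ 2 := by positivity
        have : 0 ≤ u ^ p := by positivity
        gcongr; unfold shiftedPhi; linarith
    _ = 5 * 2 ^ p * (shiftedPhi p b u + shiftedPhi p b v) := by ring

lemma convexOn_shiftedPhi (hp : 2 ≤ p) {a : ℝ} (ha : 0 ≤ a) :
    ConvexOn ℝ (Ici 0) (shiftedPhi p a) :=
  ((convexOn_pow 2).smul (rpow_nonneg ha _)).add (convexOn_rpow (by linarith))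

lemma monotoneOn_shiftedPhi (hp : 2 ≤ p) {a : ℝ} (ha : 0 ≤ a) :
    MonotoneOn (shiftedPhi p a) (Ici 0) := by
  intro s hs t _ hst
  unfold shiftedPhi
  have := rpow_le_rpow (mem_Ici.1 hs) hst (by linarith : 0 ≤ p)
  gcongr

lemma continuous_shiftedPhi (hp : 2 ≤ p) (a : ℝ) : Continuous (shiftedPhi p a) :=
  (continuous_const.mul (continuous_pow 2)).add
    (continuous_id.rpow_const fun _ => Or.inr (by linarith))

end ShiftedPhi

section Comparison

variable {E : Type*} [NormedAddCommGroup E] [NormedSpace ℝ E] {p : ℝ}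

lemma norm_normPowSMul_sq (hp : 2 ≤ p) (z : E) :
    ‖normPowSMul ((p - 2) / 2) z‖ ^ 2 = ‖z‖ ^ p := by
  rw [norm_normPowSMul, mul_pow, rpow_div_two_sq (norm_nonneg z),
    rpow_sub_two_mul_sq hp (norm_nonneg z)]

lemma exists_norm_normPowSMul_sub_sq_le (hp : 2 ≤ p) : ∃ C > 0, ∀ z w : E,
    ‖normPowSMul ((p - 2) / 2) z - normPowSMul ((p - 2) / 2) w‖ ^ 2
      ≤ C * shiftedPhi p ‖w‖ ‖z - w‖ := by
  have hα : 0 ≤ (p - 2) / 2 := by linarith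
  set K := 4 + (p - 2) / 2 * 2 ^ ((p - 2) / 2)
  refine ⟨K ^ 2 * 4 ^ (p - 2), by positivity, fun z w => ?_⟩
  have hS : ‖z‖ + ‖w‖ ≤ 2 * (‖w‖ + ‖z - w‖) := by
    linarith [norm_sub_norm_le z w, norm_nonneg (z - w)]
  calc ‖normPowSMul ((p - 2) / 2) z - normPowSMul ((p - 2) / 2) w‖ ^ 2
      ≤ (K * (‖z‖ + ‖w‖) ^ ((p - 2) / 2) * ‖z - w‖) ^ 2 := by
        gcongr; exact norm_normPowSMul_sub_le_add_rpow hα z w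
    _ = K ^ 2 * ((‖z‖ + ‖w‖) ^ (p - 2) * ‖z - w‖ ^ 2) := by
        rw [mul_pow, mul_pow, rpow_div_two_sq (by positivity)]; ring
    _ ≤ K ^ 2 * (4 ^ (p - 2) * shiftedPhi p ‖w‖ ‖z - w‖) :=
        mul_le_mul_of_nonneg_left (rpow_mul_sq_le_shiftedPhi hp (norm_nonneg _) (norm_nonneg _)
          (by positivity) hS) (by positivity)
    _ = K ^ 2 * 4 ^ (p - 2) * shiftedPhi p ‖w‖ ‖z - w‖ := by ring

lemma exists_shiftedPhi_le_norm_normPowSMul_sub_sq (hp : 2 ≤ p) : ∃ c > 0, ∀ z w : E,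
    c * shiftedPhi p ‖w‖ ‖z - w‖
      ≤ ‖normPowSMul ((p - 2) / 2) z - normPowSMul ((p - 2) / 2) w‖ ^ 2 := by
  obtain ⟨C, hC, hCle⟩ := exists_add_rpow_mul_norm_sub_le (E := E) (by linarith : 0 ≤ (p - 2) / 2)
  refine ⟨(2 * C ^ 2)⁻¹, by positivity, fun z w => ?_⟩
  rw [inv_mul_le_iff₀ (by positivity)]
  calc shiftedPhi p ‖w‖ ‖z - w‖ ≤ 2 * ((‖z‖ + ‖w‖) ^ (p - 2) * ‖z - w‖ ^ 2) :=
        shiftedPhi_le_two_mul hp (norm_nonneg _) (norm_nonneg _)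
          (by linarith [norm_nonneg z]) (norm_sub_le z w)
    _ = 2 * ((‖z‖ + ‖w‖) ^ ((p - 2) / 2) * ‖z - w‖) ^ 2 := by
        rw [mul_pow, rpow_div_two_sq (by positivity)]
    _ ≤ 2 * (C * ‖normPowSMul ((p - 2) / 2) z - normPowSMul ((p - 2) / 2) w‖) ^ 2 :=
        mul_le_mul_of_nonneg_left (pow_le_pow_left₀ (by positivity) (hCle z w) 2) zero_le_two
    _ = 2 * C ^ 2 * ‖normPowSMul ((p - 2) / 2) z - normPowSMul ((p - 2) / 2) w‖ ^ 2 := by ring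

end Comparison

section Averages

variable {Ω F : Type*} [MeasurableSpace Ω] {μ : Measure Ω} [IsProbabilityMeasure μ]
  [NormedAddCommGroup F] {p : ℝ}

lemma integrable_shiftedPhi_norm_sub (hp : 2 ≤ p) {g : Ω → F}
    (hg : MemLp g (ENNReal.ofReal p) μ) (a : ℝ) (c : F) :
    Integrable (fun x => shiftedPhi p a ‖g x - c‖) μ := by
  have hgc := hg.sub (memLp_const c)
  have h2 : MemLp (g - fun _ => c) 2 μ :=
    hgc.mono_exponent (by simpa using ENNReal.ofReal_le_ofReal hp)
  refine ((h2.integrable_norm_pow two_ne_zero).const_mul _).add ?_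
  simpa [ENNReal.toReal_ofReal (by linarith : 0 ≤ p)] using hgc.integrable_norm_rpow'

variable [NormedSpace ℝ F]

lemma memLp_two_normPowSMul (hp : 2 ≤ p) {g : Ω → F} (hg : MemLp g (ENNReal.ofReal p) μ) :
    MemLp (fun x => normPowSMul ((p - 2) / 2) (g x)) 2 μ := by
  have hmeas : AEStronglyMeasurable (fun x => normPowSMul ((p - 2) / 2) (g x)) μ := by
    unfold normPowSMul
    exact (hg.1.norm.aemeasurable.pow_const _).aestronglyMeasurable.smul hg.1
  rw [← integrable_norm_rpow_iff hmeas two_ne_zero ENNReal.ofNat_ne_top]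
  have h := hg.integrable_norm_rpow'
  rw [ENNReal.toReal_ofReal (by linarith)] at h
  simpa only [ENNReal.toReal_ofNat, rpow_two, norm_normPowSMul_sq hp] using h

variable [CompleteSpace F]

lemma norm_sub_integral_le_integral_norm_sub {f : Ω → F} (hf : Integrable f μ) (c : F) :
    ‖c - ∫ x, f x ∂μ‖ ≤ ∫ x, ‖f x - c‖ ∂μ := by
  have hmean : c - ∫ x, f x ∂μ = ∫ x, (c - f x) ∂μ := by
    rw [integral_sub (integrable_const c) hf, integral_const, probReal_univ, one_smul]
  rw [hmean]
  refine (norm_integral_le_integral_norm _).trans_eq ?_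
  simp_rw [norm_sub_rev c]

lemma map_norm_sub_integral_le {φ : ℝ → ℝ} (hφ : ConvexOn ℝ (Ici 0) φ)
    (hφm : MonotoneOn φ (Ici 0)) (hφc : ContinuousOn φ (Ici 0)) {f : Ω → F}
    (hf : Integrable f μ) (c : F) (hφf : Integrable (fun x => φ ‖f x - c‖) μ) :
    φ ‖c - ∫ x, f x ∂μ‖ ≤ ∫ x, φ ‖f x - c‖ ∂μ :=
  (hφm (norm_nonneg _) (mem_Ici.2 (integral_nonneg fun _ => norm_nonneg _))
      (norm_sub_integral_le_integral_norm_sub hf c)).trans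
    (hφ.map_integral_le hφc isClosed_Ici (ae_of_all _ fun _ => norm_nonneg _)
      (hf.sub (integrable_const c)).norm hφf)

lemma integral_norm_sub_integral_sq_le {f : Ω → F} (hf : MemLp f 2 μ) (c : F) :
    ∫ x, ‖f x - ∫ y, f y ∂μ‖ ^ 2 ∂μ ≤ 4 * ∫ x, ‖f x - c‖ ^ 2 ∂μ := by
  set m := ∫ y, f y ∂μ
  have hsq : ∀ m', Integrable (fun x => ‖f x - m'‖ ^ 2) μ :=
    fun m' => (hf.sub (memLp_const m')).integrable_norm_pow two_ne_zero
  have hpt : ∀ x, ‖f x - m‖ ^ 2 ≤ 2 * ‖f x - c‖ ^ 2 + 2 * ‖c - m‖ ^ 2 := fun x => by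
    have := norm_sub_le_norm_sub_add_norm_sub (f x) c m
    nlinarith [sq_nonneg (‖f x - c‖ - ‖c - m‖), norm_nonneg (f x - m)]
  have hjensen : ‖c - m‖ ^ 2 ≤ ∫ x, ‖f x - c‖ ^ 2 ∂μ :=
    map_norm_sub_integral_le (convexOn_pow 2) (fun s hs _ _ hst => pow_le_pow_left₀ hs hst 2)
      (continuous_pow 2).continuousOn (hf.integrable one_le_two) c (hsq c)
  calc ∫ x, ‖f x - m‖ ^ 2 ∂μ ≤ ∫ x, (2 * ‖f x - c‖ ^ 2 + 2 * ‖c - m‖ ^ 2) ∂μ :=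
        integral_mono (hsq m) (((hsq c).const_mul 2).add (integrable_const _)) hpt
    _ = 2 * ∫ x, ‖f x - c‖ ^ 2 ∂μ + 2 * ‖c - m‖ ^ 2 := by
        rw [integral_add ((hsq c).const_mul 2) (integrable_const _), integral_const_mul,
          integral_const, probReal_univ, one_smul]
    _ ≤ 4 * ∫ x, ‖f x - c‖ ^ 2 ∂μ := by linarith

lemma integral_shiftedPhi_sub_integral_le (hp : 2 ≤ p) {g : Ω → F}
    (hg : MemLp g (ENNReal.ofReal p) μ) (c : F) :
    ∫ x, shiftedPhi p ‖∫ y, g y ∂μ‖ ‖g x - ∫ y, g y ∂μ‖ ∂μ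
      ≤ 10 * 2 ^ p * ∫ x, shiftedPhi p ‖c‖ ‖g x - c‖ ∂μ := by
  set m := ∫ y, g y ∂μ
  have hK : (0 : ℝ) ≤ 5 * 2 ^ p := by positivity
  have hΦc := integrable_shiftedPhi_norm_sub hp hg ‖c‖ c
  have hpt : ∀ x, shiftedPhi p ‖m‖ ‖g x - m‖
      ≤ 5 * 2 ^ p * (shiftedPhi p ‖c‖ ‖g x - c‖ + shiftedPhi p ‖c‖ ‖c - m‖) := fun x =>
    shiftedPhi_le_of_le_add hp (norm_nonneg _) (norm_nonneg _) (norm_nonneg _) (norm_nonneg _)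
      (norm_nonneg _) (norm_le_norm_add_norm_sub' m c |>.trans_eq (by rw [norm_sub_rev]))
      (norm_sub_le_norm_sub_add_norm_sub _ _ _)
  have hjensen : shiftedPhi p ‖c‖ ‖c - m‖ ≤ ∫ x, shiftedPhi p ‖c‖ ‖g x - c‖ ∂μ :=
    map_norm_sub_integral_le (convexOn_shiftedPhi hp (norm_nonneg c))
      (monotoneOn_shiftedPhi hp (norm_nonneg c)) (continuous_shiftedPhi hp _).continuousOn
      (hg.integrable (by simpa using ENNReal.ofReal_le_ofReal (by linarith : 1 ≤ p))) c hΦc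
  calc ∫ x, shiftedPhi p ‖m‖ ‖g x - m‖ ∂μ
      ≤ ∫ x, 5 * 2 ^ p * (shiftedPhi p ‖c‖ ‖g x - c‖ + shiftedPhi p ‖c‖ ‖c - m‖) ∂μ :=
        integral_mono (integrable_shiftedPhi_norm_sub hp hg _ _)
          ((hΦc.add (integrable_const _)).const_mul _) hpt
    _ = 5 * 2 ^ p * (∫ x, shiftedPhi p ‖c‖ ‖g x - c‖ ∂μ + shiftedPhi p ‖c‖ ‖c - m‖) := by
        rw [integral_const_mul, integral_add hΦc (integrable_const _), integral_const,
          probReal_univ, one_smul]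
    _ ≤ 10 * 2 ^ p * ∫ x, shiftedPhi p ‖c‖ ‖g x - c‖ ∂μ := by
        linarith [mul_le_mul_of_nonneg_left hjensen hK]

lemma integral_norm_normPowSMul_sub_sq_le (hp : 2 ≤ p) {C : ℝ}
    (hC : ∀ z w : F, ‖normPowSMul ((p - 2) / 2) z - normPowSMul ((p - 2) / 2) w‖ ^ 2
      ≤ C * shiftedPhi p ‖w‖ ‖z - w‖)
    {g : Ω → F} (hg : MemLp g (ENNReal.ofReal p) μ) :
    ∫ x, ‖normPowSMul ((p - 2) / 2) (g x) - ∫ y, normPowSMul ((p - 2) / 2) (g y) ∂μ‖ ^ 2 ∂μ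
      ≤ 4 * C * ∫ x, shiftedPhi p ‖∫ y, g y ∂μ‖ ‖g x - ∫ y, g y ∂μ‖ ∂μ := by
  set m := ∫ y, g y ∂μ
  have hV := memLp_two_normPowSMul hp hg
  calc _ ≤ 4 * ∫ x, ‖normPowSMul ((p - 2) / 2) (g x) - normPowSMul ((p - 2) / 2) m‖ ^ 2 ∂μ :=
        integral_norm_sub_integral_sq_le hV _
    _ ≤ 4 * ∫ x, C * shiftedPhi p ‖m‖ ‖g x - m‖ ∂μ :=
        mul_le_mul_of_nonneg_left (integral_mono
          ((hV.sub (memLp_const _)).integrable_norm_pow two_ne_zero)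
          ((integrable_shiftedPhi_norm_sub hp hg _ _).const_mul C) fun x => hC _ _) (by norm_num)
    _ = 4 * C * ∫ x, shiftedPhi p ‖m‖ ‖g x - m‖ ∂μ := by rw [integral_const_mul, mul_assoc]

lemma integral_shiftedPhi_le (hp : 2 ≤ p) {c : ℝ} (hc : 0 ≤ c)
    (hcle : ∀ z w : F, c * shiftedPhi p ‖w‖ ‖z - w‖
      ≤ ‖normPowSMul ((p - 2) / 2) z - normPowSMul ((p - 2) / 2) w‖ ^ 2)
    {g : Ω → F} (hg : MemLp g (ENNReal.ofReal p) μ) :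
    c * ∫ x, shiftedPhi p ‖∫ y, g y ∂μ‖ ‖g x - ∫ y, g y ∂μ‖ ∂μ
      ≤ 10 * 2 ^ p *
        ∫ x, ‖normPowSMul ((p - 2) / 2) (g x) - ∫ y, normPowSMul ((p - 2) / 2) (g y) ∂μ‖ ^ 2 ∂μ := by
  set M := ∫ y, normPowSMul ((p - 2) / 2) (g y) ∂μ
  set z₁ := normPowSMul ((2 - p) / p) M
  have hz₁ : normPowSMul ((p - 2) / 2) z₁ = M :=
    normPowSMul_normPowSMul (by field_simp; ring) M
  calc c * ∫ x, shiftedPhi p ‖∫ y, g y ∂μ‖ ‖g x - ∫ y, g y ∂μ‖ ∂μ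
      ≤ c * (10 * 2 ^ p * ∫ x, shiftedPhi p ‖z₁‖ ‖g x - z₁‖ ∂μ) := by
        gcongr; exact integral_shiftedPhi_sub_integral_le hp hg z₁
    _ = 10 * 2 ^ p * ∫ x, c * shiftedPhi p ‖z₁‖ ‖g x - z₁‖ ∂μ := by
        rw [integral_const_mul]; ring
    _ ≤ 10 * 2 ^ p *
          ∫ x, ‖normPowSMul ((p - 2) / 2) (g x) - normPowSMul ((p - 2) / 2) z₁‖ ^ 2 ∂μ :=
        mul_le_mul_of_nonneg_left (integral_mono
          ((integrable_shiftedPhi_norm_sub hp hg _ _).const_mul c)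
          (((memLp_two_normPowSMul hp hg).sub (memLp_const _)).integrable_norm_pow two_ne_zero)
          fun x => hcle _ _) (by positivity)
    _ = _ := by rw [hz₁]

end Averages

lemma rpow_bounds_of_mul_le {p a A B I J : ℝ} (hp : 0 < p) (ha : 0 ≤ a) (hA : 0 < A)
    (hB : 0 ≤ B) (hI : 0 ≤ I) (hJ : 0 ≤ J) (hlow : a * I ≤ A * J) (hup : J ≤ B * I) :
    (a / A) ^ (1 / (2 : ℝ)) * (I ^ (1 / p)) ^ (p / 2) ≤ J ^ (1 / (2 : ℝ)) ∧
      J ^ (1 / (2 : ℝ)) ≤ B ^ (1 / (2 : ℝ)) * (I ^ (1 / p)) ^ (p / 2) := by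
  have hroot : (I ^ (1 / p)) ^ (p / 2) = I ^ (1 / (2 : ℝ)) := by
    rw [← rpow_mul hI]; congr 1; field_simp
  rw [hroot, ← mul_rpow (by positivity) hI, ← mul_rpow hB hI]
  constructor
  · refine rpow_le_rpow (by positivity) ?_ (by norm_num)
    rw [div_mul_eq_mul_div, div_le_iff₀ hA]; linarith
  · exact rpow_le_rpow hJ hup (by norm_num)

theorem stmt10 (n N : ℕ) (p : ℝ) (hp : 2 ≤ p) :
    ∃ c₁ c₂ : ℝ, 0 < c₁ ∧ 0 < c₂ ∧
      ∀ (x₀ : EuclideanSpace ℝ (Fin n)) (ρ : ℝ), 0 < ρ →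
        ∀ w : EuclideanSpace ℝ (Fin n) → EuclideanSpace ℝ (Fin N),
          Differentiable ℝ w →
          IntegrableOn (fun x => fderiv ℝ w x) (Metric.ball x₀ ρ) →
          IntegrableOn (fun x => ‖fderiv ℝ w x‖ ^ p) (Metric.ball x₀ ρ) →
          c₁ * ((⨍ x in Metric.ball x₀ ρ,
                  (‖(⨍ y in Metric.ball x₀ ρ, fderiv ℝ w y)‖ ^ (p - 2) *
                      ‖fderiv ℝ w x - (⨍ y in Metric.ball x₀ ρ, fderiv ℝ w y)‖ ^ 2 +
                    ‖fderiv ℝ w x - (⨍ y in Metric.ball x₀ ρ, fderiv ℝ w y)‖ ^ p)) ^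
                (1 / p)) ^ (p / 2) ≤
            (⨍ x in Metric.ball x₀ ρ,
                ‖Vmap p (fderiv ℝ w x) -
                    (⨍ y in Metric.ball x₀ ρ, Vmap p (fderiv ℝ w y))‖ ^ 2) ^ (1 / (2:ℝ)) ∧
          (⨍ x in Metric.ball x₀ ρ,
              ‖Vmap p (fderiv ℝ w x) -
                  (⨍ y in Metric.ball x₀ ρ, Vmap p (fderiv ℝ w y))‖ ^ 2) ^ (1 / (2:ℝ)) ≤
            c₂ * ((⨍ x in Metric.ball x₀ ρ,
                    (‖(⨍ y in Metric.ball x₀ ρ, fderiv ℝ w y)‖ ^ (p - 2) *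
                        ‖fderiv ℝ w x - (⨍ y in Metric.ball x₀ ρ, fderiv ℝ w y)‖ ^ 2 +
                      ‖fderiv ℝ w x - (⨍ y in Metric.ball x₀ ρ, fderiv ℝ w y)‖ ^ p)) ^
                  (1 / p)) ^ (p / 2) := by
  have hp0 : 0 < p := by linarith
  obtain ⟨C, hC, hCle⟩ := exists_norm_normPowSMul_sub_sq_le
    (E := EuclideanSpace ℝ (Fin n) →L[ℝ] EuclideanSpace ℝ (Fin N)) hp
  obtain ⟨c, hc, hcle⟩ := exists_shiftedPhi_le_norm_normPowSMul_sub_sq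
    (E := EuclideanSpace ℝ (Fin n) →L[ℝ] EuclideanSpace ℝ (Fin N)) hp
  refine ⟨(c / (10 * 2 ^ p)) ^ (1 / (2 : ℝ)), (4 * C) ^ (1 / (2 : ℝ)), by positivity,
    by positivity, fun x₀ ρ hρ w _ _ hgp => ?_⟩
  set μ := volume.restrict (Metric.ball x₀ ρ)
  have : IsFiniteMeasure μ := isFiniteMeasure_restrict.2 measure_ball_lt_top.ne
  have : NeZero μ := ⟨(Measure.restrict_eq_zero.not).2 (Metric.measure_ball_pos volume x₀ hρ).ne'⟩
  -- `⨍ x in B, f x` unfolds to the integral against the probability measure `(μ univ)⁻¹ • μ`,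
  -- and `Vmap p` to `normPowSMul ((p - 2) / 2)`
  have hg : MemLp (fderiv ℝ w) (ENNReal.ofReal p) ((μ univ)⁻¹ • μ) := by
    refine MemLp.smul_measure ?_ (ENNReal.inv_ne_top.2 (NeZero.ne (μ univ)))
    rw [← integrable_norm_rpow_iff (measurable_fderiv ℝ w).aestronglyMeasurable
      (by simpa using hp0) ENNReal.ofReal_ne_top, ENNReal.toReal_ofReal hp0.le]
    exact hgp
  exact rpow_bounds_of_mul_le hp0 hc.le (by positivity) (by positivity)
    (integral_nonneg fun _ => shiftedPhi_nonneg p (norm_nonneg _) (norm_nonneg _))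
    (integral_nonneg fun _ => by positivity)
    (integral_shiftedPhi_le hp hc.le hcle hg) (integral_norm_normPowSMul_sub_sq_le hp hCle hg)
end
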